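/- Let p : [0,2π] → ℝ be twice differentiable and t : [0,2π] → ℝ be differentiable with t' = (p')² − p², and let γ(θ) = (p cos θ − p' sin θ, p sin θ + p' cos θ, t − p'p). Then for every θ ∈ [0,2π]: (i) γ(θ) lies on the horizontal line ℓ(p(θ), θ, t(θ)), namely γ(θ) = ℓ(s) at s = p'(θ); and (ii) the tangent vector satisfies γ'(θ) = (p(θ) + p''(θ)) · (−sin θ, cos θ, −p(θ)), i.e. γ'(θ) is a scalar multiple of the direction vector (−sin θ, cos θ, −p(θ)) of the line ℓ(p(θ), θ, t(θ)). -/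

import Mathlib

/-!
Differentiating the envelope, the terms containing `p'` cancel in the first two coordinates,
leaving `(p + p'')·(-sin θ, cos θ)`. In the third coordinate `(t - p'p)' = t' - p''p - p'²`,
and the condition `t' = p'² - p²` turns this into `(p + p'')·(-p)`.
-/

open Real

section EnvelopeDerivatives

variable {p q t : ℝ → ℝ} {θ a : ℝ}

theorem hasDerivAt_envelope_x (hp : HasDerivAt p (q θ) θ) (hq : HasDerivAt q a θ) :
    HasDerivAt (fun θ => p θ * cos θ - q θ * sin θ) ((p θ + a) * -sin θ) θ :=
  ((hp.mul (hasDerivAt_cos θ)).sub (hq.mul (hasDerivAt_sin θ))).congr_deriv (by ring)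

theorem hasDerivAt_envelope_y (hp : HasDerivAt p (q θ) θ) (hq : HasDerivAt q a θ) :
    HasDerivAt (fun θ => p θ * sin θ + q θ * cos θ) ((p θ + a) * cos θ) θ :=
  ((hp.mul (hasDerivAt_sin θ)).add (hq.mul (hasDerivAt_cos θ))).congr_deriv (by ring)

theorem hasDerivAt_envelope_z (hp : HasDerivAt p (q θ) θ) (hq : HasDerivAt q a θ)
    (ht : HasDerivAt t (q θ ^ 2 - p θ ^ 2) θ) :
    HasDerivAt (fun θ => t θ - q θ * p θ) ((p θ + a) * -p θ) θ :=
  (ht.sub (hq.mul hp)).congr_deriv (by ring)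

end EnvelopeDerivatives

/-- The envelope curve γ lies on the horizontal line ℓ(p(θ),θ,t(θ)) at the parameter
value s = p'(θ), and its tangent vector is γ'(θ) = (p + p'')·(−sin θ, cos θ, −p),
a scalar multiple of the direction vector of the line. -/
theorem envelope_tangent_to_lines (p t : ℝ → ℝ)
    (hp : Differentiable ℝ p) (hp' : Differentiable ℝ (deriv p))
    (ht : Differentiable ℝ t)
    (hcond : ∀ θ ∈ Set.Icc (0 : ℝ) (2 * Real.pi),
      deriv t θ = (deriv p θ) ^ 2 - (p θ) ^ 2)
    (x y z : ℝ → ℝ)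
    (hx : x = fun θ => p θ * Real.cos θ - deriv p θ * Real.sin θ)
    (hy : y = fun θ => p θ * Real.sin θ + deriv p θ * Real.cos θ)
    (hz : z = fun θ => t θ - deriv p θ * p θ)
    (ℓ : ℝ → ℝ → ℝ × ℝ × ℝ)
    (hℓ : ℓ = fun θ s =>
      (p θ * Real.cos θ - s * Real.sin θ,
       p θ * Real.sin θ + s * Real.cos θ,
       t θ - s * p θ)) :
    ∀ θ ∈ Set.Icc (0 : ℝ) (2 * Real.pi),
      (x θ, y θ, z θ) = ℓ θ (deriv p θ) ∧
      (deriv x θ, deriv y θ, deriv z θ)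
        = ((p θ + deriv (deriv p) θ) * (-Real.sin θ),
           (p θ + deriv (deriv p) θ) * Real.cos θ,
           (p θ + deriv (deriv p) θ) * (-p θ)) := by
  intro θ hθ
  subst hx hy hz hℓ
  have hpθ := (hp θ).hasDerivAt
  have hp'θ := (hp' θ).hasDerivAt
  have htθ : HasDerivAt t (deriv p θ ^ 2 - p θ ^ 2) θ := hcond θ hθ ▸ (ht θ).hasDerivAt
  refine ⟨rfl, ?_⟩
  rw [(hasDerivAt_envelope_x hpθ hp'θ).deriv, (hasDerivAt_envelope_y hpθ hp'θ).deriv,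
    (hasDerivAt_envelope_z hpθ hp'θ htθ).deriv]
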